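/- arXiv:1503.03791 — 3 statements merged into one kernel-verified Lean document; each statement's English description precedes it below -/
import Mathlib

section
/- Let G = (V,E) be connected, G' = (V,E') with E ⊆ E', vw ∈ E' \ E, and C a vw-cut of G. For every (vw,C)-connected component (V*,E*) of G, the vector x ∈ {0,1}^{E'} defined by x_{rs} = 0 iff both r ∈ V* and s ∈ V* encodes a multicut of G' lifted from G and satisfies 1 − x_{vw} = Σ_{e ∈ C}(1 − x_e). -/
open SimpleGraph

variable {V : Type}

section Defs

variable [Fintype V] [DecidableEq V]

/-- A decomposition of a graph `G`: a partition of the vertex set into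
blocks each of which induces a connected subgraph of `G`. -/
def IsDecomposition (G : SimpleGraph V) (P : Set (Set V)) : Prop :=
  (∀ U ∈ P, ∀ W ∈ P, U ≠ W → Disjoint U W) ∧
  (∀ v : V, ∃ U ∈ P, v ∈ U) ∧
  (∀ U ∈ P, (G.induce U).Connected)

/-- An edge `e` straddles distinct blocks of `P` if no block contains both endpoints. -/
def Straddles (P : Set (Set V)) (e : Sym2 V) : Prop := ∀ U ∈ P, ¬ ∀ v ∈ e, v ∈ U

/-- The set of edges of `G` straddling distinct blocks of `P` (the map `φ_G`). -/
def cutEdges (G : SimpleGraph V) (P : Set (Set V)) : Set (Sym2 V) :=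
  {e | e ∈ G.edgeSet ∧ Straddles P e}

/-- A multicut of `G`: a set of edges meeting every cycle of `G` in a number of
edges different from 1. -/
def IsMulticut (G : SimpleGraph V) (M : Set (Sym2 V)) : Prop :=
  M ⊆ G.edgeSet ∧ ∀ ⦃u : V⦄ (c : G.Walk u u), c.IsCycle →
    (M ∩ {e | e ∈ c.edges}).ncard ≠ 1

/-- A multicut of `G'` lifted from `G`. -/
def IsLiftedMulticut (G G' : SimpleGraph V) (M : Set (Sym2 V)) : Prop :=
  ∃ P : Set (Set V), IsDecomposition G P ∧ M = cutEdges G' P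

/-- The closed walk `c` has a chord in the graph `H`: an edge of `H` joining two
vertices of `c` that is not an edge of `c`. -/
def HasChord (H : SimpleGraph V) {G : SimpleGraph V} {u : V} (c : G.Walk u u) : Prop :=
  ∃ e ∈ H.edgeSet, (∀ v ∈ e, v ∈ c.support) ∧ e ∉ c.edges

/-- A `vw`-cut of `G`: a minimal set of edges whose removal disconnects `v` from `w`. -/
def IsCut (G : SimpleGraph V) (v w : V) (C : Finset (Sym2 V)) : Prop :=
  ↑C ⊆ G.edgeSet ∧ ¬ (G.deleteEdges ↑C).Reachable v w ∧
    ∀ C' : Finset (Sym2 V), C' ⊂ C → (G.deleteEdges ↑C').Reachable v w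

/-- The cycle inequalities for cycles of `G`. -/
def CycleIneqs (G : SimpleGraph V) (x : Sym2 V → ℕ) : Prop :=
  ∀ ⦃u : V⦄ (c : G.Walk u u), c.IsCycle → ∀ e ∈ c.edges,
    x e ≤ ∑ e' ∈ c.edges.toFinset.erase e, x e'

/-- The path inequalities for pairs `vw ∈ E' \ E` and `vw`-paths of `G`. -/
def PathIneqs (G G' : SimpleGraph V) (x : Sym2 V → ℕ) : Prop :=
  ∀ v w : V, s(v, w) ∈ G'.edgeSet \ G.edgeSet →
    ∀ p : G.Walk v w, p.IsPath → x s(v, w) ≤ ∑ e ∈ p.edges.toFinset, x e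

/-- The cut inequalities for pairs `vw ∈ E' \ E` and `vw`-cuts of `G`. -/
def CutIneqs (G G' : SimpleGraph V) (x : Sym2 V → ℕ) : Prop :=
  ∀ v w : V, s(v, w) ∈ G'.edgeSet \ G.edgeSet →
    ∀ C : Finset (Sym2 V), IsCut G v w C → 1 - x s(v, w) ≤ ∑ e ∈ C, (1 - x e)

/-- Characteristic vector of an edge set, in `ℝ^{Sym2 V}`. -/
noncomputable def charVec (M : Set (Sym2 V)) : Sym2 V → ℝ :=
  fun e => by classical exact if e ∈ M then 1 else 0

/-- The characteristic vectors of multicuts of `G'` lifted from `G`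
(the vertex set of the lifted multicut polytope `Ξ_{GG'}`). -/
def liftedVectors (G G' : SimpleGraph V) : Set (Sym2 V → ℝ) :=
  {x | ∃ M : Set (Sym2 V), IsLiftedMulticut G G' M ∧ x = charVec M}

/-- The characteristic vectors of multicuts of `G'`. -/
def multicutVectors (G' : SimpleGraph V) : Set (Sym2 V → ℝ) :=
  {x | ∃ M : Set (Sym2 V), IsMulticut G' M ∧ x = charVec M}

/-- The inequality `ineq`, with associated equality `eqn`, defines a facet of the
lifted multicut polytope `Ξ_{GG'}` (which has dimension `|E'|`): it is valid, and
the face it induces has dimension `|E'| - 1`. -/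
def DefinesFacet (G G' : SimpleGraph V) (ineq eqn : (Sym2 V → ℝ) → Prop) : Prop :=
  (∀ x ∈ liftedVectors G G', ineq x) ∧
  Module.finrank ℝ (vectorSpan ℝ {x ∈ liftedVectors G G' | eqn x}) = G'.edgeSet.ncard - 1

/-- Facet-defining for the multicut polytope `Ξ_{G'}`. -/
def DefinesFacetMC (G' : SimpleGraph V) (ineq eqn : (Sym2 V → ℝ) → Prop) : Prop :=
  (∀ x ∈ multicutVectors G', ineq x) ∧
  Module.finrank ℝ (vectorSpan ℝ {x ∈ multicutVectors G' | eqn x}) = G'.edgeSet.ncard - 1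

/-- `u` is a `v`-`w`-cut-vertex: it lies on every `vw`-path of `G`. -/
def IsCutVertex (G : SimpleGraph V) (v w u : V) : Prop :=
  ∀ p : G.Walk v w, p.IsPath → u ∈ p.support

/-- `S` is a `u`-`v`-separating node set of `G`. -/
def IsSeparatingSet (G : SimpleGraph V) (u v : V) (S : Set V) : Prop :=
  u ∉ S ∧ v ∉ S ∧ ∀ p : G.Walk u v, p.IsPath → ∃ s ∈ S, s ∈ p.support

/-- The side of the cut `C` containing `v`. -/
def vSide (G : SimpleGraph V) (C : Finset (Sym2 V)) (v : V) : Set V :=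
  {u | (G.deleteEdges ↑C).Reachable v u}

/-- The component of `G` induced by `U` is properly `(vw,C)`-connected. -/
def ProperlyConnected (G : SimpleGraph V) (v w : V) (C : Finset (Sym2 V)) (U : Set V) : Prop :=
  (G.induce U).Connected ∧ v ∈ U ∧ w ∈ U ∧
    ({e | e ∈ C ∧ ∀ u ∈ e, u ∈ U} : Set (Sym2 V)).ncard = 1

/-- The component of `G` induced by `U` is improperly `(vw,C)`-connected. -/
def ImproperlyConnected (G : SimpleGraph V) (v w : V) (C : Finset (Sym2 V)) (U : Set V) : Prop :=
  (G.induce U).Connected ∧ (U ⊆ vSide G C v ∨ U ⊆ vSide G C w)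

/-- `(vw,C)`-connected: properly or improperly so. -/
def VWCConnected (G : SimpleGraph V) (v w : V) (C : Finset (Sym2 V)) (U : Set V) : Prop :=
  ProperlyConnected G v w C U ∨ ImproperlyConnected G v w C U

/-- The vertex set of the maximal component of `H` containing `u`. -/
def compSupp (H : SimpleGraph V) (u : V) : Set V := {u' | H.Reachable u u'}

end Defs

private lemma reach_erase [DecidableEq V] {G : SimpleGraph V} {C : Finset (Sym2 V)}
    {e : Sym2 V} {a b : V} (he : e = s(a, b))
    (hab : (G.deleteEdges ↑C).Reachable a b) {p q : V}
    (h : (G.deleteEdges ↑(C.erase e)).Reachable p q) :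
    (G.deleteEdges ↑C).Reachable p q := by
  obtain ⟨pw⟩ := h
  induction pw with
  | nil => exact Reachable.refl _
  | cons hadj _ ih =>
    rename_i s t u _
    rw [SimpleGraph.deleteEdges_adj] at hadj
    refine Reachable.trans ?_ ih
    by_cases hmem : s(s, t) ∈ C
    · have hne : s(s, t) = e := by
        by_contra hne
        exact hadj.2 (Finset.mem_erase.mpr ⟨hne, hmem⟩)
      rw [he, Sym2.eq_iff] at hne
      rcases hne with ⟨rfl, rfl⟩ | ⟨rfl, rfl⟩
      · exact hab
      · exact hab.symm
    · exact SimpleGraph.Adj.reachable (by rw [SimpleGraph.deleteEdges_adj]; exact ⟨hadj.1, hmem⟩)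

private lemma cut_edge_not_same_side [DecidableEq V] {G : SimpleGraph V} {v w : V}
    {C : Finset (Sym2 V)} (hC : IsCut G v w C) {a b : V} (he : s(a, b) ∈ C)
    (hab : (G.deleteEdges ↑C).Reachable a b) : False := by
  have h1 := hC.2.2 (C.erase s(a, b)) (Finset.erase_ssubset he)
  exact hC.2.1 (reach_erase rfl hab h1)

/-- For `vw ∈ E' \ E`, a `vw`-cut `C` of `G` and any
`(vw,C)`-connected component of `G` with vertex set `U`, the vector `x` with
`x_{rs} = 0` iff both endpoints lie in `U` encodes a multicut of `G'` lifted from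
`G` and satisfies `1 - x_{vw} = Σ_{e ∈ C}(1 - x_e)`. -/
theorem component_vector_satisfies_cut_equality [Fintype V] [DecidableEq V]
    (G G' : SimpleGraph V) (hG : G.Connected) (hle : G ≤ G')
    (v w : V) (hf : s(v, w) ∈ G'.edgeSet \ G.edgeSet)
    (C : Finset (Sym2 V)) (hC : IsCut G v w C)
    (U : Set V) (hU : VWCConnected G v w C U)
    (x : Sym2 V → ℕ) (h01 : ∀ e, x e = 0 ∨ x e = 1)
    (hsupp : ∀ e ∉ G'.edgeSet, x e = 0)
    (hxdef : ∀ e ∈ G'.edgeSet, (x e = 0 ↔ ∀ u ∈ e, u ∈ U)) :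
    IsLiftedMulticut G G' {e | x e = 1} ∧
      1 - x s(v, w) = ∑ e ∈ C, (1 - x e) := by
  classical
  have hUconn : (G.induce U).Connected := by
    rcases hU with h | h
    · exact h.1
    · exact h.1
  have hCE' : ∀ e ∈ C, e ∈ G'.edgeSet := fun e he =>
    (SimpleGraph.edgeSet_subset_edgeSet.2 hle) (hC.1 he)
  have hx1 : ∀ e, x e = 1 ↔ e ∈ G'.edgeSet ∧ ¬ ∀ u ∈ e, u ∈ U := by
    intro e
    constructor
    · intro h1
      have he' : e ∈ G'.edgeSet := by
        by_contra h
        rw [hsupp e h] at h1; exact absurd h1 (by norm_num)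
      refine ⟨he', fun hall => ?_⟩
      have := (hxdef e he').mpr hall
      rw [this] at h1; exact absurd h1 (by norm_num)
    · rintro ⟨he', hnall⟩
      rcases h01 e with h0 | h1
      · exact absurd ((hxdef e he').mp h0) hnall
      · exact h1
  constructor
  · -- lifted multicut
    refine ⟨insert U ((fun a => ({a} : Set V)) '' {a | a ∉ U}), ⟨?_, ?_, ?_⟩, ?_⟩
    · rintro A hA B hB hne
      rw [Set.disjoint_left]
      intro z hzA hzB
      rcases Set.mem_insert_iff.1 hA with rfl | ⟨a, ha, rfl⟩ <;>
        rcases Set.mem_insert_iff.1 hB with rfl | ⟨b, hb, rfl⟩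
      · exact hne rfl
      · exact hb (by rwa [Set.mem_singleton_iff.1 hzB] at hzA)
      · exact ha (by rwa [Set.mem_singleton_iff.1 hzA] at hzB)
      · exact hne (by rw [Set.mem_singleton_iff.1 hzA] at hzB; rw [hzB])
    · intro u
      by_cases hu : u ∈ U
      · exact ⟨U, Set.mem_insert _ _, hu⟩
      · exact ⟨{u}, Set.mem_insert_iff.2 (Or.inr ⟨u, hu, rfl⟩), rfl⟩
    · intro A hA
      rcases Set.mem_insert_iff.1 hA with rfl | ⟨a, _, rfl⟩
      · exact hUconn
      · haveI : Nonempty (({a} : Set V)) := ⟨⟨a, rfl⟩⟩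
        refine ⟨fun s t => ?_⟩
        have hst : s = t := Subtype.ext (s.2.trans t.2.symm)
        rw [hst]
    · ext e
      simp only [Set.mem_setOf_eq, cutEdges, Straddles]
      rw [hx1 e]
      constructor
      · rintro ⟨he', hnall⟩
        refine ⟨he', fun A hA hall => ?_⟩
        rcases Set.mem_insert_iff.1 hA with rfl | ⟨a, _, rfl⟩
        · exact hnall hall
        · induction e using Sym2.ind with
          | _ r s =>
            have hr : r = a := hall r (by simp)
            have hs : s = a := hall s (by simp)
            subst hr; subst hs
            rw [SimpleGraph.mem_edgeSet] at he'
            exact G'.irrefl he'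
      · rintro ⟨he', hstr⟩
        exact ⟨he', hstr U (Set.mem_insert _ _)⟩
  · -- the equality
    have hsum : ∑ e ∈ C, (1 - x e) = (C.filter fun e => x e = 0).card := by
      rw [Finset.card_filter]
      refine Finset.sum_congr rfl fun e _ => ?_
      rcases h01 e with h | h <;> simp [h]
    rcases hU with ⟨_, hv, hw, hone⟩ | ⟨_, hside⟩
    · -- proper case
      have hx0 : x s(v, w) = 0 := by
        refine (hxdef _ hf.1).mpr fun u hu => ?_
        rcases Sym2.mem_iff.1 hu with rfl | rfl
        · exact hv
        · exact hw
      rw [hx0, hsum]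
      have hset : ({e | e ∈ C ∧ ∀ u ∈ e, u ∈ U} : Set (Sym2 V))
          = ↑(C.filter fun e => x e = 0) := by
        ext e
        simp only [Set.mem_setOf_eq, Finset.coe_filter]
        constructor
        · rintro ⟨heC, hall⟩
          exact ⟨heC, (hxdef e (hCE' e heC)).mpr hall⟩
        · rintro ⟨heC, h0⟩
          exact ⟨heC, (hxdef e (hCE' e heC)).mp h0⟩
      rw [hset, Set.ncard_coe_finset] at hone
      omega
    · -- improper case
      have hnotboth : ∀ a b : V, a ∈ U → b ∈ U →
          (G.deleteEdges ↑C).Reachable a b := by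
        intro a b ha hb
        rcases hside with hs | hs
        · exact ((hs ha).symm.trans (hs hb))
        · exact ((hs ha).symm.trans (hs hb))
      have hxe1 : ∀ e ∈ C, x e = 1 := by
        intro e heC
        rcases h01 e with h0 | h1
        · exfalso
          have hall := (hxdef e (hCE' e heC)).mp h0
          induction e using Sym2.ind with
          | _ a b =>
            exact cut_edge_not_same_side hC heC
              (hnotboth a b (hall a (by simp)) (hall b (by simp)))
        · exact h1
      have hvw1 : x s(v, w) = 1 := by
        rcases h01 s(v, w) with h0 | h1
        · exfalso
          have hall := (hxdef _ hf.1).mp h0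
          have hv : v ∈ U := hall v (by simp)
          have hw : w ∈ U := hall w (by simp)
          exact hC.2.1 (hnotboth v w hv hw)
        · exact h1
      rw [hvw1]
      rw [Finset.sum_congr rfl fun e he => by rw [hxe1 e he]]
      simp
end

section
/- Let G = (V,E) be connected, G' = (V,E') with E ⊆ E', vw ∈ E' \ E, and C a vw-cut of G. If there exists an edge e ∈ C contained in no (vw,C)-connected component of G, then every x ∈ {0,1}^{E'} encoding a lifted multicut with 1 − x_{vw} = Σ_{e' ∈ C}(1 − x_{e'}) satisfies x_e = 1; consequently the corresponding face of Ξ_{GG'} has dimension at most |E'| − 2 and is not a facet. -/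
open SimpleGraph

variable {V : Type}

/-! On the cut face, `x_e = 0` would force `x_vw = 0` and `x_c = 1` for every other `c ∈ C`.
Then `v` and `w` lie in one block `U` of the decomposition; a `vw`-walk inside `U` must use an
edge of `C`, which is not cut and so is `e`. Hence `U` is a properly `(vw,C)`-connected component
containing `e`, which is excluded. So the face lies in the hyperplane `x_e = 1` as well as in the
hyperplane of the cut equality, and these are independent in `ℝ^{E'}` because `vw ∉ C`. -/

theorem eq_zero_and_ne_zero_of_one_sub_eq_sum {ι : Type*} {s : Finset ι} {f : ι → ℕ} {a : ℕ}
    {i : ι} (hi : i ∈ s) (hfi : f i = 0) (h : 1 - a = ∑ j ∈ s, (1 - f j)) :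
    a = 0 ∧ ∀ j ∈ s, j ≠ i → f j ≠ 0 := by
  classical
  rw [← Finset.add_sum_erase s _ hi, hfi] at h
  have hrest : ∑ j ∈ s.erase i, (1 - f j) = 0 := by omega
  refine ⟨by omega, fun j hj hji => ?_⟩
  have := Finset.sum_eq_zero_iff.mp hrest j (Finset.mem_erase.mpr ⟨hji, hj⟩)
  omega

theorem vectorSpan_le_ker_of_forall_eq {k E F : Type*} [Ring k] [AddCommGroup E] [Module k E]
    [AddCommGroup F] [Module k F] (f : E →ₗ[k] F) {S : Set E} {c : F} (h : ∀ x ∈ S, f x = c) :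
    vectorSpan k S ≤ LinearMap.ker f := by
  rw [vectorSpan_def, Submodule.span_le]
  rintro _ ⟨x, hx, y, hy, rfl⟩
  simp [h x hx, h y hy]

theorem finrank_le_card_of_eqOn_zero {K ι : Type*} [Field K] {W : Submodule K (ι → K)}
    (T : Finset ι) (h : ∀ y ∈ W, (∀ i ∈ T, y i = 0) → y = 0) : Module.finrank K W ≤ T.card := by
  let ψ : W →ₗ[K] (T → K) := (LinearMap.funLeft K K ((↑) : T → ι)).comp W.subtype
  have hψ : Function.Injective ψ := by
    rw [← LinearMap.ker_eq_bot, Submodule.eq_bot_iff]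
    rintro ⟨y, hy⟩ hψy
    exact Subtype.ext (h y hy fun i hi => congrFun hψy ⟨i, hi⟩)
  simpa using LinearMap.finrank_le_finrank_of_injective hψ

theorem exists_mem_subset_of_not_reachable_deleteEdges {G : SimpleGraph V} {U : Set V}
    (hU : (G.induce U).Connected) {v w : V} (hv : v ∈ U) (hw : w ∈ U) {s : Set (Sym2 V)}
    (hs : ¬ (G.deleteEdges s).Reachable v w) : ∃ c ∈ s, ∀ u ∈ c, u ∈ U := by
  by_contra! h
  let f : G.induce U →g G.deleteEdges s :=
    ⟨Subtype.val, fun {a b} hab => deleteEdges_adj.mpr ⟨hab, fun hs => by simpa using h _ hs⟩⟩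
  exact hs ((hU.preconnected ⟨v, hv⟩ ⟨w, hw⟩).map f)

section LiftedMulticut

variable {G G' : SimpleGraph V} {v w : V} {C : Finset (Sym2 V)} {e : Sym2 V}

theorem IsLiftedMulticut.exists_mem_ne_notMem {M : Set (Sym2 V)}
    (hM : IsLiftedMulticut G G' M) (hvw : s(v, w) ∈ G'.edgeSet)
    (hvwM : s(v, w) ∉ M) (hC : ¬ (G.deleteEdges ↑C).Reachable v w)
    (hno : ∀ U, ProperlyConnected G v w C U → ¬ ∀ u ∈ e, u ∈ U) :
    ∃ c ∈ C, c ≠ e ∧ c ∉ M := by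
  obtain ⟨P, ⟨-, -, hconn⟩, rfl⟩ := hM
  by_contra! hCM
  obtain ⟨U, hU, hvU, hwU⟩ : ∃ U ∈ P, v ∈ U ∧ w ∈ U := by
    simpa [Straddles] using fun h => hvwM ⟨hvw, h⟩
  have inside_eq : ∀ c ∈ C, (∀ u ∈ c, u ∈ U) → c = e := fun c hc hcU =>
    by_contra fun hne => (hCM c hc hne).2 U hU hcU
  obtain ⟨c, hc, hcU⟩ := exists_mem_subset_of_not_reachable_deleteEdges (hconn U hU) hvU hwU hC
  obtain rfl := inside_eq c hc hcU
  refine hno U ⟨hconn U hU, hvU, hwU, Set.ncard_eq_one.mpr ⟨c, ?_⟩⟩ hcU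
  exact Set.ext fun c' => ⟨fun h => inside_eq c' h.1 h.2, by rintro rfl; exact ⟨hc, hcU⟩⟩

theorem eq_one_of_cut_eq (hvw : s(v, w) ∈ G'.edgeSet)
    (hC : ¬ (G.deleteEdges ↑C).Reachable v w) (he : e ∈ C)
    (hno : ∀ U, ProperlyConnected G v w C U → ¬ ∀ u ∈ e, u ∈ U) (x : Sym2 V → ℕ)
    (h01 : ∀ e', x e' = 0 ∨ x e' = 1) (hM : IsLiftedMulticut G G' {e' | x e' = 1})
    (heq : 1 - x s(v, w) = ∑ e' ∈ C, (1 - x e')) : x e = 1 := by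
  refine (h01 e).resolve_left fun hxe => ?_
  obtain ⟨hxvw, hxC⟩ := eq_zero_and_ne_zero_of_one_sub_eq_sum he hxe heq
  obtain ⟨c, hc, hce, hcM⟩ := hM.exists_mem_ne_notMem hvw (by simp [hxvw]) hC hno
  exact hcM ((h01 c).resolve_left (hxC c hc hce))

theorem eq_zero_of_mem_liftedVectors {x : Sym2 V → ℝ}
    (hx : x ∈ liftedVectors G G') (he : e ∉ G'.edgeSet) : x e = 0 := by
  obtain ⟨M, ⟨P, -, rfl⟩, rfl⟩ := hx
  simp [charVec, cutEdges, he]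

theorem eq_one_of_mem_liftedVectors_of_cut_eq
    (hvw : s(v, w) ∈ G'.edgeSet) (hC : ¬ (G.deleteEdges ↑C).Reachable v w)
    (he : e ∈ C) (hno : ∀ U, ProperlyConnected G v w C U → ¬ ∀ u ∈ e, u ∈ U)
    {x : Sym2 V → ℝ} (hx : x ∈ liftedVectors G G') (heq : 1 - x s(v, w) = ∑ e' ∈ C, (1 - x e')) :
    x e = 1 := by
  classical
  obtain ⟨M, hM, rfl⟩ := hx
  let n : Sym2 V → ℕ := fun e' => if e' ∈ M then 1 else 0
  have hn : ∀ e', charVec M e' = n e' := fun e' => by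
    by_cases h : e' ∈ M <;> simp [charVec, n, h]
  have hsub : ∀ e', ((1 - n e' : ℕ) : ℝ) = 1 - charVec M e' := fun e' => by
    by_cases h : e' ∈ M <;> simp [charVec, n, h]
  have hne := eq_one_of_cut_eq hvw hC he hno n (fun e' => by by_cases h : e' ∈ M <;> simp [n, h])
    (by convert hM; ext; simp [n]) (Nat.cast_injective (R := ℝ) (by
      simp only [Nat.cast_sum, hsub]; exact heq))
  rw [hn, hne, Nat.cast_one]

theorem cut_face_direction
    (hface : ∀ x ∈ liftedVectors G G', 1 - x s(v, w) = ∑ e' ∈ C, (1 - x e') → x e = 1)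
    {y : Sym2 V → ℝ} (hy : y ∈ vectorSpan ℝ
      {x ∈ liftedVectors G G' | 1 - x s(v, w) = ∑ e' ∈ C, (1 - x e')}) :
    y e = 0 ∧ y s(v, w) = ∑ c ∈ C, y c ∧ ∀ e' ∉ G'.edgeSet, y e' = 0 := by
  have hconst : ∀ (f : (Sym2 V → ℝ) →ₗ[ℝ] ℝ) (c : ℝ),
      (∀ x ∈ liftedVectors G G', 1 - x s(v, w) = ∑ e' ∈ C, (1 - x e') → f x = c) → f y = 0 :=
    fun f _ h => LinearMap.mem_ker.mp
      (vectorSpan_le_ker_of_forall_eq f (fun x hx => h x hx.1 hx.2) hy)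
  refine ⟨hconst (LinearMap.proj e) 1 hface, ?_, fun e' he' =>
    hconst (LinearMap.proj e') 0 fun x hx _ => eq_zero_of_mem_liftedVectors hx he'⟩
  have := hconst (LinearMap.proj s(v, w) - ∑ c ∈ C, LinearMap.proj (R := ℝ) (φ := fun _ => ℝ) c)
    (1 - C.card) fun x _ heq => by
      simp only [Finset.sum_sub_distrib, Finset.sum_const, nsmul_one] at heq
      simp only [LinearMap.sub_apply, LinearMap.sum_apply, LinearMap.proj_apply]
      linarith
  simpa [sub_eq_zero] using this

theorem finrank_cut_face_le [Fintype V] (hle : G ≤ G')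
    (hf : s(v, w) ∈ G'.edgeSet \ G.edgeSet) (hCG : ↑C ⊆ G.edgeSet) (he : e ∈ C)
    (hface : ∀ x ∈ liftedVectors G G', 1 - x s(v, w) = ∑ e' ∈ C, (1 - x e') → x e = 1) :
    Module.finrank ℝ (vectorSpan ℝ
        {x ∈ liftedVectors G G' | 1 - x s(v, w) = ∑ e' ∈ C, (1 - x e')}) ≤
      G'.edgeSet.ncard - 2 := by
  classical
  have hC : ∀ c ∈ C, c ≠ s(v, w) := fun c hc => ne_of_mem_of_not_mem (hCG hc) hf.2
  have heE' : e ∈ G'.edgeSet := edgeSet_mono hle (hCG he)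
  refine (finrank_le_card_of_eqOn_zero (G'.edgeSet.toFinset \ {e, s(v, w)})
    fun y hy hT => ?_).trans_eq ?_
  · obtain ⟨hye, hyvw, hyout⟩ := cut_face_direction hface hy
    have hne : ∀ e' ≠ s(v, w), y e' = 0 := fun e' hne' => by
      by_cases h1 : e' ∈ G'.edgeSet
      · by_cases h2 : e' = e
        · rwa [h2]
        · exact hT e' (by simp [h1, h2, hne'])
      · exact hyout e' h1
    funext e'
    by_cases h : e' = s(v, w)
    · rw [h, hyvw, Pi.zero_apply, Finset.sum_eq_zero fun c hc => hne c (hC c hc)]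
    · exact hne e' h
  · rw [Finset.card_sdiff_of_subset (by simp [Set.insert_subset_iff, heE', hf.1]),
      Finset.card_pair (hC e he), Set.ncard_eq_toFinset_card']

end LiftedMulticut

theorem cut_face_not_facet_general [Fintype V]
    (G G' : SimpleGraph V) (hle : G ≤ G')
    (v w : V) (hf : s(v, w) ∈ G'.edgeSet \ G.edgeSet)
    (C : Finset (Sym2 V)) (hC : IsCut G v w C)
    (e : Sym2 V) (he : e ∈ C)
    (hno : ∀ U : Set V, VWCConnected G v w C U → ¬ ∀ u ∈ e, u ∈ U) :
    (∀ x : Sym2 V → ℕ, (∀ e', x e' = 0 ∨ x e' = 1) → (∀ e' ∉ G'.edgeSet, x e' = 0) →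
      IsLiftedMulticut G G' {e' | x e' = 1} →
      1 - x s(v, w) = ∑ e' ∈ C, (1 - x e') → x e = 1) ∧
    Module.finrank ℝ (vectorSpan ℝ
        {x ∈ liftedVectors G G' | 1 - x s(v, w) = ∑ e' ∈ C, (1 - x e')}) ≤
      G'.edgeSet.ncard - 2 ∧
    ¬ DefinesFacet G G' (fun x => 1 - x s(v, w) ≤ ∑ e' ∈ C, (1 - x e'))
        (fun x => 1 - x s(v, w) = ∑ e' ∈ C, (1 - x e')) := by
  have hno' : ∀ U, ProperlyConnected G v w C U → ¬ ∀ u ∈ e, u ∈ U :=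
    fun U hU => hno U (Or.inl hU)
  have hdim := finrank_cut_face_le hle hf hC.1 he fun _ hx heq =>
    eq_one_of_mem_liftedVectors_of_cut_eq hf.1 hC.2.1 he hno' hx heq
  refine ⟨fun x h01 _ hM heq => eq_one_of_cut_eq hf.1 hC.2.1 he hno' x h01 hM heq, hdim, ?_⟩
  rintro ⟨-, hfacet⟩
  dsimp only at hfacet
  have htwo : 2 ≤ G'.edgeSet.ncard := by
    rw [← Set.ncard_pair (ne_of_mem_of_not_mem (hC.1 he) hf.2)]
    exact Set.ncard_le_ncard (Set.pair_subset (edgeSet_mono hle (hC.1 he)) hf.1) (Set.toFinite _)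
  omega

/-- If some `e ∈ C` lies in no `(vw,C)`-connected component of
`G`, then every lifted multicut vector satisfying the cut equality has `x_e = 1`;
consequently the corresponding face of `Ξ_{GG'}` has dimension at most `|E'| - 2`
and is not a facet. -/
theorem cut_face_not_facet [Fintype V] [DecidableEq V]
    (G G' : SimpleGraph V) (hG : G.Connected) (hle : G ≤ G')
    (v w : V) (hf : s(v, w) ∈ G'.edgeSet \ G.edgeSet)
    (C : Finset (Sym2 V)) (hC : IsCut G v w C)
    (e : Sym2 V) (he : e ∈ C)
    (hno : ∀ U : Set V, VWCConnected G v w C U → ¬ ∀ u ∈ e, u ∈ U) :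
    (∀ x : Sym2 V → ℕ, (∀ e', x e' = 0 ∨ x e' = 1) → (∀ e' ∉ G'.edgeSet, x e' = 0) →
      IsLiftedMulticut G G' {e' | x e' = 1} →
      1 - x s(v, w) = ∑ e' ∈ C, (1 - x e') → x e = 1) ∧
    Module.finrank ℝ (vectorSpan ℝ
        {x ∈ liftedVectors G G' | 1 - x s(v, w) = ∑ e' ∈ C, (1 - x e')}) ≤
      G'.edgeSet.ncard - 2 ∧
    ¬ DefinesFacet G G' (fun x => 1 - x s(v, w) ≤ ∑ e' ∈ C, (1 - x e'))
        (fun x => 1 - x s(v, w) = ∑ e' ∈ C, (1 - x e')) :=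
  cut_face_not_facet_general G G' hle v w hf C hC e he hno
end

section
/- Let G = (V,E) be connected and G' = (V,E') with E ⊆ E'. For every x ∈ {0,1}^{E'} encoding a multicut of G' lifted from G and every {v,w} ∈ E', x_{vw} = 0 if and only if v and w are connected in the graph (V, {e ∈ E : x_e = 0}). -/
open SimpleGraph

variable {V : Type}

/-- For every `x` encoding a multicut of `G'` lifted from `G` and
every `{v,w} ∈ E'`, `x_{vw} = 0` iff `v` and `w` are connected in the graph
`(V, {e ∈ E : x_e = 0})`. -/
theorem lifted_zero_iff_connected [Fintype V] [DecidableEq V]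
    (G G' : SimpleGraph V) (hG : G.Connected) (hle : G ≤ G')
    (x : Sym2 V → ℕ) (h01 : ∀ e, x e = 0 ∨ x e = 1)
    (hsupp : ∀ e ∉ G'.edgeSet, x e = 0)
    (hx : IsLiftedMulticut G G' {e | x e = 1})
    (v w : V) (hvw : s(v, w) ∈ G'.edgeSet) :
    x s(v, w) = 0 ↔ (G.deleteEdges {e | x e = 1}).Reachable v w := by
  obtain ⟨P, ⟨hdisj, hcover, hconn⟩, hM⟩ := hx
  have hmem : ∀ e, x e = 1 ↔ e ∈ cutEdges G' P := fun e => by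
    constructor
    · intro h; rw [← hM]; exact h
    · intro h; have : e ∈ {e | x e = 1} := hM ▸ h; exact this
  -- adjacent vertices in the deleted graph lie in a common block
  have hadj : ∀ a b : V, (G.deleteEdges {e | x e = 1}).Adj a b →
      ∀ U ∈ P, a ∈ U → b ∈ U := by
    intro a b hab U hU haU
    obtain ⟨hGab, hnot⟩ := hab
    have hx1 : x s(a, b) ≠ 1 := fun h =>
      hnot ((SimpleGraph.fromEdgeSet_adj _).2 ⟨h, hGab.ne⟩)
    have hnstr : ¬ Straddles P s(a, b) := by
      intro hs
      exact hx1 ((hmem _).2 ⟨hle hGab, hs⟩)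
    unfold Straddles at hnstr
    push_neg at hnstr
    obtain ⟨W, hW, hWm⟩ := hnstr
    have haW : a ∈ W := hWm a (by simp)
    have hbW : b ∈ W := hWm b (by simp)
    by_cases hUW : U = W
    · exact hUW ▸ hbW
    · exact absurd haW (Set.disjoint_left.1 (hdisj U hU W hW hUW) haU)
  constructor
  · intro h0
    have hx1 : x s(v, w) ≠ 1 := by omega
    have hnc : s(v, w) ∉ cutEdges G' P := fun hc => hx1 ((hmem _).2 hc)
    have hnstr : ¬ Straddles P s(v, w) := fun hs => hnc ⟨hvw, hs⟩
    unfold Straddles at hnstr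
    push_neg at hnstr
    obtain ⟨U, hU, hUm⟩ := hnstr
    have hvU : v ∈ U := hUm v (by simp)
    have hwU : w ∈ U := hUm w (by simp)
    have hc := hconn U hU
    have hr : (G.induce U).Reachable ⟨v, hvU⟩ ⟨w, hwU⟩ := hc.1 _ _
    -- map to deleteEdges
    let f : G.induce U →g G.deleteEdges {e | x e = 1} :=
      { toFun := Subtype.val
        map_rel' := by
          rintro ⟨a, haU⟩ ⟨b, hbU⟩ hab
          refine ⟨hab, ?_⟩
          intro hx1
          have hstr : Straddles P s(a, b) :=
            ((hmem _).1 ((SimpleGraph.fromEdgeSet_adj _).1 hx1).1).2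
          exact hstr U hU (fun u hu => by
            rcases Sym2.mem_iff.1 hu with rfl | rfl
            · exact haU
            · exact hbU) }
    exact hr.map f
  · intro hr
    obtain ⟨U, hU, hvU⟩ := hcover v
    obtain ⟨p⟩ := hr
    have hwU : w ∈ U := by
      clear hvw
      induction p with
      | nil => exact hvU
      | cons h q ih => exact ih (hadj _ _ h U hU hvU)
    have hnstr : ¬ Straddles P s(v, w) := by
      intro hs
      exact hs U hU (fun u hu => by
        rcases Sym2.mem_iff.1 hu with rfl | rfl
        · exact hvU
        · exact hwU)
    have : x s(v, w) ≠ 1 := fun h => hnstr ((hmem _).1 h).2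
    rcases h01 s(v, w) with h | h
    · exact h
    · exact absurd h this
end
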